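/- Monotone winding of hyperbolic rotation (infinitesimal version): for any two distinct points x, y in the open unit disk 𝔻 of ℂ, the derivative at α = 0 of g(α) = arg(f(e^{iα} y) − f(e^{iα} x)) is strictly positive, where f(z) = i(1−z)/(1+z) maps 𝔻 conformally onto the upper half plane. Consequently, g'(0) = 1 − d/dα[arg(1 + e^{iα}x)]|₀ − d/dα[arg(1 + e^{iα}y)]|₀ > 0. -/

import Mathlib

/-!
The Cayley map `f z = i(1-z)/(1+z)` has `f'(w) = -2i/(1+w)²`, so the velocity of
`α ↦ f(e^{iα} z)` at `α = 0` is `2z/(1+z)²`. Since `f y - f x = 2i(x-y)/((1+x)(1+y))`, the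
logarithmic derivative of `c(α) = f(e^{iα} y) - f(e^{iα} x)` at `0` is
`i(1 - xy)/((1+x)(1+y)) = i(1 - x/(1+x) - y/(1+y))`, and for `|z| < 1` one has
`Re(z/(1+z)) < 1/2`, which is just `|z|² < 1` after clearing denominators.
-/

open Complex

noncomputable def cayley (z : ℂ) : ℂ := I * (1 - z) / (1 + z)

lemma one_add_ne_zero_of_norm_lt_one {z : ℂ} (hz : ‖z‖ < 1) : 1 + z ≠ 0 := by
  intro h
  rw [add_eq_zero_iff_neg_eq.mp h |>.symm, norm_neg, norm_one] at hz
  exact lt_irrefl 1 hz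

lemma re_div_one_add_lt_half {z : ℂ} (hz : ‖z‖ < 1) : (z / (1 + z)).re < 1 / 2 := by
  have hnormSq : z.re * z.re + z.im * z.im < 1 := by
    rw [← normSq_apply, normSq_eq_norm_sq]
    nlinarith [norm_nonneg z]
  have hden : 0 < normSq (1 + z) := normSq_pos.mpr (one_add_ne_zero_of_norm_lt_one hz)
  rw [div_re, ← add_div, div_lt_iff₀ hden]
  simp only [add_re, add_im, one_re, one_im, normSq_apply] at hden ⊢
  nlinarith

lemma hasDerivAt_cayley {w : ℂ} (hw : 1 + w ≠ 0) : HasDerivAt cayley (-2 * I / (1 + w) ^ 2) w := by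
  have hnum : HasDerivAt (fun z : ℂ => I * (1 - z)) (-I) w := by
    simpa using ((hasDerivAt_id w).const_sub 1).const_mul I
  exact (hnum.div ((hasDerivAt_id' w).const_add 1) hw).congr_deriv (by ring)

lemma hasDerivAt_exp_ofReal_mul_I_mul (z : ℂ) :
    HasDerivAt (fun α : ℝ => exp (α * I) * z) (I * z) 0 := by
  have hline : HasDerivAt (fun α : ℝ => (α : ℂ) * I) I 0 := by
    simpa using (ofRealCLM.hasDerivAt (x := (0 : ℝ))).mul_const I
  simpa using hline.cexp.mul_const z

lemma hasDerivAt_cayley_exp_ofReal_mul_I_mul {z : ℂ} (hz : 1 + z ≠ 0) :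
    HasDerivAt (fun α : ℝ => cayley (exp (α * I) * z)) (2 * z / (1 + z) ^ 2) 0 := by
  have hcayley : HasDerivAt cayley (-2 * I / (1 + z) ^ 2) (exp ((0 : ℝ) * I) * z) := by
    simpa using hasDerivAt_cayley hz
  refine (hcayley.comp (0 : ℝ) (hasDerivAt_exp_ofReal_mul_I_mul z)).congr_deriv ?_
  linear_combination (-2 * z / (1 + z) ^ 2) * I_sq

lemma cayley_sub_cayley {x y : ℂ} (hx : 1 + x ≠ 0) (hy : 1 + y ≠ 0) :
    cayley y - cayley x = 2 * I * (x - y) / ((1 + x) * (1 + y)) := by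
  unfold cayley
  field_simp
  ring

lemma div_cayley_sub_cayley {x y : ℂ} (hx : 1 + x ≠ 0) (hy : 1 + y ≠ 0) (hxy : x ≠ y) :
    (2 * y / (1 + y) ^ 2 - 2 * x / (1 + x) ^ 2) / (cayley y - cayley x)
      = I * (1 - x / (1 + x) - y / (1 + y)) := by
  have hxy' : x - y ≠ 0 := sub_ne_zero.mpr hxy
  rw [cayley_sub_cayley hx hy, div_eq_iff (by simp [hx, hy, hxy', I_ne_zero])]
  field_simp
  ring_nf
  rw [I_sq]
  ring

/-- Monotone winding of hyperbolic rotation: for distinct `x`, `y` in the open unit disk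
and `f z = i(1-z)/(1+z)`, the curve `c(α) = f(e^{iα} y) - f(e^{iα} x)` is differentiable
at `0` and the derivative of its (continuous) argument at `α = 0`, namely
`Im (c'(0)/c(0))`, equals `1 - Re(x/(1+x)) - Re(y/(1+y))` and is strictly positive. -/
theorem stmt14 (x y : ℂ) (hx : ‖x‖ < 1) (hy : ‖y‖ < 1) (hxy : x ≠ y) :
    ∃ c' : ℂ,
      HasDerivAt (fun α : ℝ =>
          Complex.I * (1 - Complex.exp ((α : ℂ) * Complex.I) * y)
              / (1 + Complex.exp ((α : ℂ) * Complex.I) * y)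
            - Complex.I * (1 - Complex.exp ((α : ℂ) * Complex.I) * x)
              / (1 + Complex.exp ((α : ℂ) * Complex.I) * x)) c' 0 ∧
      (c' / (Complex.I * (1 - y) / (1 + y) - Complex.I * (1 - x) / (1 + x))).im
        = 1 - (x / (1 + x)).re - (y / (1 + y)).re ∧
      0 < (c' / (Complex.I * (1 - y) / (1 + y) - Complex.I * (1 - x) / (1 + x))).im := by
  have hx' := one_add_ne_zero_of_norm_lt_one hx
  have hy' := one_add_ne_zero_of_norm_lt_one hy
  have hratio : (2 * y / (1 + y) ^ 2 - 2 * x / (1 + x) ^ 2)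
      / (I * (1 - y) / (1 + y) - I * (1 - x) / (1 + x)) = I * (1 - x / (1 + x) - y / (1 + y)) :=
    div_cayley_sub_cayley hx' hy' hxy
  refine ⟨_, (hasDerivAt_cayley_exp_ofReal_mul_I_mul hy').sub
    (hasDerivAt_cayley_exp_ofReal_mul_I_mul hx'), ?_, ?_⟩
  · simp [hratio]
  · simp only [hratio, mul_im, I_re, I_im, zero_mul, one_mul, zero_add, sub_re, one_re]
    linarith [re_div_one_add_lt_half hx, re_div_one_add_lt_half hy]
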